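/- arXiv:2407.08233 — 2 statements merged into one kernel-verified Lean document; each statement's English description precedes it below -/
import Mathlib

section
/- Joint convexity of the perspective-type function: for α > 1, the map (x, y) ↦ x^α / y^{α-1} is jointly convex on (0,∞) × (0,∞). -/
/-! The function is the perspective `(x, y) ↦ y * g (x / y)` of the convex function
`g t = t ^ α`, and perspectives of convex functions are jointly convex: writing
`y = a y₁ + b y₂`, the point `x / y` is the convex combination of `x₁ / y₁` and `x₂ / y₂`
with weights `a y₁ / y` and `b y₂ / y`, so convexity of `g` at these weights, multiplied
by `y`, is the joint convexity inequality. -/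

open Real Set

section Perspective

variable {E : Type*} [AddCommGroup E] [Module ℝ E]

noncomputable def perspective (g : E → ℝ) (p : E × ℝ) : ℝ := p.2 * g (p.2⁻¹ • p.1)

theorem exists_weights_inv_smul_add {a b y₁ y₂ : ℝ} (x₁ x₂ : E) (hy₁ : 0 < y₁) (hy₂ : 0 < y₂)
    (ha : 0 ≤ a) (hb : 0 ≤ b) (hab : a + b = 1) :
    ∃ w₁ w₂ : ℝ, 0 ≤ w₁ ∧ 0 ≤ w₂ ∧ w₁ + w₂ = 1 ∧
      (a * y₁ + b * y₂) * w₁ = a * y₁ ∧ (a * y₁ + b * y₂) * w₂ = b * y₂ ∧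
      (a * y₁ + b * y₂)⁻¹ • (a • x₁ + b • x₂) = w₁ • (y₁⁻¹ • x₁) + w₂ • (y₂⁻¹ • x₂) := by
  have hy : 0 < a * y₁ + b * y₂ := convex_Ioi (0 : ℝ) hy₁ hy₂ ha hb hab
  refine ⟨a * y₁ / (a * y₁ + b * y₂), b * y₂ / (a * y₁ + b * y₂), by positivity, by positivity,
    by rw [← add_div, div_self hy.ne'], by field_simp, by field_simp, ?_⟩
  simp only [smul_add, smul_smul]
  congr 2 <;> field_simp

theorem ConvexOn.perspective {s : Set E} {g : E → ℝ} (hg : ConvexOn ℝ s g) :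
    ConvexOn ℝ {p : E × ℝ | 0 < p.2 ∧ p.2⁻¹ • p.1 ∈ s} (perspective g) := by
  constructor
  · rintro ⟨x₁, y₁⟩ ⟨hy₁, hz₁⟩ ⟨x₂, y₂⟩ ⟨hy₂, hz₂⟩ a b ha hb hab
    obtain ⟨w₁, w₂, hw₁, hw₂, hw, -, -, hcomb⟩ :=
      exists_weights_inv_smul_add x₁ x₂ hy₁ hy₂ ha hb hab
    refine ⟨convex_Ioi (0 : ℝ) hy₁ hy₂ ha hb hab, ?_⟩
    simp only [Prod.smul_mk, Prod.mk_add_mk, smul_eq_mul, hcomb]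
    exact hg.1 hz₁ hz₂ hw₁ hw₂ hw
  · rintro ⟨x₁, y₁⟩ ⟨hy₁, hz₁⟩ ⟨x₂, y₂⟩ ⟨hy₂, hz₂⟩ a b ha hb hab
    obtain ⟨w₁, w₂, hw₁, hw₂, hw, hyw₁, hyw₂, hcomb⟩ :=
      exists_weights_inv_smul_add x₁ x₂ hy₁ hy₂ ha hb hab
    have hy : 0 < a * y₁ + b * y₂ := convex_Ioi (0 : ℝ) hy₁ hy₂ ha hb hab
    simp only [_root_.perspective, Prod.smul_mk, Prod.mk_add_mk, smul_eq_mul, hcomb]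
    calc (a * y₁ + b * y₂) * g (w₁ • y₁⁻¹ • x₁ + w₂ • y₂⁻¹ • x₂)
        ≤ (a * y₁ + b * y₂) * (w₁ * g (y₁⁻¹ • x₁) + w₂ * g (y₂⁻¹ • x₂)) :=
          mul_le_mul_of_nonneg_left (hg.2 hz₁ hz₂ hw₁ hw₂ hw) hy.le
      _ = a * (y₁ * g (y₁⁻¹ • x₁)) + b * (y₂ * g (y₂⁻¹ • x₂)) := by
          rw [mul_add, ← mul_assoc, ← mul_assoc, hyw₁, hyw₂]
          ring

end Perspective

theorem mul_inv_mul_rpow_eq_rpow_div_rpow_sub_one {x y : ℝ} (α : ℝ) (hx : 0 ≤ x)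
    (hy : 0 < y) : y * (y⁻¹ * x) ^ α = x ^ α / y ^ (α - 1) := by
  rw [mul_rpow (inv_nonneg.mpr hy.le) hx, inv_rpow hy.le, rpow_sub_one hy.ne']
  field_simp

/-- for `α > 1`, the map `(x, y) ↦ x^α / y^(α-1)` is jointly convex on
`(0,∞) × (0,∞)`. -/
theorem perspective_jointly_convex (α : ℝ) (hα : 1 < α) :
    ConvexOn ℝ (Set.Ioi (0 : ℝ) ×ˢ Set.Ioi (0 : ℝ))
      (fun p : ℝ × ℝ => p.1 ^ α / p.2 ^ (α - 1)) := by
  have hpow : ConvexOn ℝ (Ici 0) (fun t : ℝ => t ^ α) := convexOn_rpow hα.le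
  refine (hpow.perspective.subset ?_ ((convex_Ioi 0).prod (convex_Ioi 0))).congr ?_
  · rintro ⟨x, y⟩ ⟨hx, hy⟩
    exact ⟨hy, (mul_nonneg (inv_nonneg.mpr hy.le) hx.le : 0 ≤ y⁻¹ * x)⟩
  · rintro ⟨x, y⟩ ⟨hx, hy⟩
    exact mul_inv_mul_rpow_eq_rpow_div_rpow_sub_one α hx.le hy
end

section
/- For the ReLU-splitting subproblem, the minimizer of U ↦ ‖x' - max(U,0)‖² + ‖U - z‖² (scalar case, with x' ≥ 0) is given by: U* = z if -x' ≤ z ≤ -(√2 - 1)x' ≤ 0; U* = min(0, z) if z + x' ≤ 0; and U* = (z + x')/2 otherwise. -/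
/-!
On `U ≤ 0` the objective is `x'² + (U - z)²`, minimized at `min 0 z`; on `U ≥ 0` it is
`(x' - z)²/2 + 2 (U - (x' + z)/2)²`, minimized at `(x' + z)/2` when `x' + z ≥ 0` and at `0`
otherwise. The global minimizer is the better of the two branch minimizers, and for `z ≤ 0 ≤ x' + z`
comparing `x'²` with `(x' - z)²/2` is comparing `√2 x'` with `x' - z`, which produces the threshold
`z = -(√2 - 1) x'`.
-/

open Set Real

theorem IsMinOn.univ_of_union {α β : Type*} [Preorder β] {f : α → β} {s t : Set α}
    (hst : s ∪ t = univ) {p q c : α} (hp : IsMinOn f s p) (hq : IsMinOn f t q)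
    (hcp : f c ≤ f p) (hcq : f c ≤ f q) : IsMinOn f univ c := by
  intro x _
  rcases (hst.symm ▸ mem_univ x : x ∈ s ∪ t) with hx | hx
  · exact hcp.trans (hp hx)
  · exact hcq.trans (hq hx)

theorem two_mul_sq_le_sq_sub_iff {a z : ℝ} (ha : 0 ≤ a) (haz : 0 ≤ a - z) :
    2 * a ^ 2 ≤ (a - z) ^ 2 ↔ z ≤ -(√2 - 1) * a := by
  have h2 : 2 * a ^ 2 = (√2 * a) ^ 2 := by
    rw [mul_pow, sq_sqrt zero_le_two]
  rw [h2, pow_le_pow_iff_left₀ (by positivity) haz two_ne_zero]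
  constructor <;> intro h <;> linarith

def reluSplitObjective (a z U : ℝ) : ℝ := (a - max U 0) ^ 2 + (U - z) ^ 2

namespace reluSplitObjective

variable {a z U : ℝ}

theorem of_nonpos (hU : U ≤ 0) : reluSplitObjective a z U = a ^ 2 + (U - z) ^ 2 := by
  rw [reluSplitObjective, max_eq_right hU, sub_zero]

theorem of_nonneg (hU : 0 ≤ U) :
    reluSplitObjective a z U = (a - z) ^ 2 / 2 + 2 * (U - (a + z) / 2) ^ 2 := by
  rw [reluSplitObjective, max_eq_left hU]
  ring

theorem midpoint_eq (h : 0 ≤ a + z) : reluSplitObjective a z ((a + z) / 2) = (a - z) ^ 2 / 2 := by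
  rw [of_nonneg (by linarith), sub_self, zero_pow two_ne_zero, mul_zero, add_zero]

theorem isMinOn_Iic_min : IsMinOn (reluSplitObjective a z) (Iic 0) (min 0 z) := by
  refine isMinOn_iff.2 fun U (hU : U ≤ 0) => ?_
  simp only [of_nonpos hU, of_nonpos (min_le_left 0 z), add_le_add_iff_left]
  rcases le_total z 0 with hz | hz
  · rw [min_eq_right hz, sub_self, zero_pow two_ne_zero]
    positivity
  · rw [min_eq_left hz]
    nlinarith

theorem isMinOn_Ici_midpoint (h : 0 ≤ a + z) :
    IsMinOn (reluSplitObjective a z) (Ici 0) ((a + z) / 2) := by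
  refine isMinOn_iff.2 fun U (hU : 0 ≤ U) => ?_
  simp only [midpoint_eq h, of_nonneg hU, le_add_iff_nonneg_right]
  positivity

theorem isMinOn_Ici_zero (h : a + z ≤ 0) : IsMinOn (reluSplitObjective a z) (Ici 0) 0 := by
  refine isMinOn_iff.2 fun U (hU : 0 ≤ U) => ?_
  simp only [reluSplitObjective, max_eq_left hU, max_self]
  nlinarith

theorem min_le_midpoint (ha : 0 ≤ a) (hmid : 0 ≤ a + z) (hthr : z ≤ -(√2 - 1) * a) :
    reluSplitObjective a z (min 0 z) ≤ reluSplitObjective a z ((a + z) / 2) := by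
  have hz : z ≤ 0 := hthr.trans (by nlinarith [one_lt_sqrt_two])
  rw [midpoint_eq hmid, min_eq_right hz, of_nonpos hz, sub_self, zero_pow two_ne_zero, add_zero]
  linarith [(two_mul_sq_le_sq_sub_iff ha (by linarith)).2 hthr]

theorem midpoint_le_min (hpos : 0 < a + z) (hthr : z ≤ 0 → -(√2 - 1) * a < z) :
    reluSplitObjective a z ((a + z) / 2) ≤ reluSplitObjective a z (min 0 z) := by
  rw [midpoint_eq hpos.le]
  rcases le_total z 0 with hz | hz
  · rw [min_eq_right hz, of_nonpos hz, sub_self, zero_pow two_ne_zero, add_zero]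
    have := (two_mul_sq_le_sq_sub_iff (by linarith) (by linarith)).not.2 (hthr hz).not_ge
    linarith
  · rw [min_eq_left hz, of_nonpos le_rfl]
    nlinarith [sq_nonneg (a + z)]

end reluSplitObjective

open reluSplitObjective

theorem relu_splitting_minimizer_general (x' z : ℝ) :
    ((-x' ≤ z ∧ z ≤ -(Real.sqrt 2 - 1) * x' ∧ -(Real.sqrt 2 - 1) * x' ≤ 0) →
      IsMinOn (fun U : ℝ => (x' - max U 0) ^ 2 + (U - z) ^ 2) Set.univ z) ∧
    (z + x' ≤ 0 →
      IsMinOn (fun U : ℝ => (x' - max U 0) ^ 2 + (U - z) ^ 2) Set.univ (min 0 z)) ∧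
    ((¬(-x' ≤ z ∧ z ≤ -(Real.sqrt 2 - 1) * x' ∧ -(Real.sqrt 2 - 1) * x' ≤ 0) ∧
        ¬(z + x' ≤ 0)) →
      IsMinOn (fun U : ℝ => (x' - max U 0) ^ 2 + (U - z) ^ 2) Set.univ ((z + x') / 2)) := by
  rw [add_comm z x']
  refine ⟨fun ⟨hlo, hhi, hthr⟩ => ?_, fun hneg => ?_, fun ⟨hnot, hpos⟩ => ?_⟩
  · have ha : 0 ≤ x' := by nlinarith [one_lt_sqrt_two]
    have hmin : IsMinOn (reluSplitObjective x' z) univ (min 0 z) :=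
      IsMinOn.univ_of_union Iic_union_Ici isMinOn_Iic_min (isMinOn_Ici_midpoint (by linarith))
        le_rfl (min_le_midpoint ha (by linarith) hhi)
    rwa [min_eq_right (hhi.trans hthr)] at hmin
  · exact IsMinOn.univ_of_union Iic_union_Ici isMinOn_Iic_min (isMinOn_Ici_zero hneg) le_rfl
      (isMinOn_Iic_min (mem_Iic.2 le_rfl))
  · have hpos : 0 < x' + z := not_le.1 hpos
    have hthr : z ≤ 0 → -(√2 - 1) * x' < z := fun hz =>
      not_le.1 fun hle => hnot ⟨by linarith, hle, by nlinarith [one_lt_sqrt_two]⟩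
    exact IsMinOn.univ_of_union Iic_union_Ici isMinOn_Iic_min (isMinOn_Ici_midpoint hpos.le)
      (midpoint_le_min hpos hthr) le_rfl

/-- the scalar ReLU-splitting subproblem
`h(U) = (x' - max(U,0))² + (U - z)²` with `x' ≥ 0` has global minimizer
`U* = z` if `-x' ≤ z ≤ -(√2-1)x' ≤ 0`, `U* = min(0,z)` if `z + x' ≤ 0`, and
`U* = (z + x')/2` otherwise. -/
theorem relu_splitting_minimizer (x' z : ℝ) (hx' : 0 ≤ x') :
    ((-x' ≤ z ∧ z ≤ -(Real.sqrt 2 - 1) * x' ∧ -(Real.sqrt 2 - 1) * x' ≤ 0) →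
      IsMinOn (fun U : ℝ => (x' - max U 0) ^ 2 + (U - z) ^ 2) Set.univ z) ∧
    (z + x' ≤ 0 →
      IsMinOn (fun U : ℝ => (x' - max U 0) ^ 2 + (U - z) ^ 2) Set.univ (min 0 z)) ∧
    ((¬(-x' ≤ z ∧ z ≤ -(Real.sqrt 2 - 1) * x' ∧ -(Real.sqrt 2 - 1) * x' ≤ 0) ∧
        ¬(z + x' ≤ 0)) →
      IsMinOn (fun U : ℝ => (x' - max U 0) ^ 2 + (U - z) ^ 2) Set.univ ((z + x') / 2)) :=
  relu_splitting_minimizer_general x' z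
end
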